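/- Let Σ be an alphabet, w an infinite word over Σ, and (T_u)_{u ∈ w°} a family of trees over Σ indexed by the off-words of w. Let T = Pref(w) ∪ ⋃_{u ∈ w°} uT_u. Then T is a tree over Σ, and its set of infinite branches is [T] = {w} ∪ ⋃_{u ∈ w°} u[T_u], where moreover the sets u[T_u] for distinct u ∈ w° are pairwise disjoint and do not contain w. -/
import Mathlib


/-- The prefix of length `n` of an infinite word `w : ℕ → A`. -/
def pre {A : Type*} (w : ℕ → A) (n : ℕ) : List A := List.ofFn (fun i : Fin n => w i)

/-- A tree over `A`: a set of finite words closed under taking prefixes. -/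
def IsTree {A : Type*} (T : Set (List A)) : Prop := ∀ u ∈ T, ∀ v, v <+: u → v ∈ T

/-- The set of infinite branches of a set `T` of finite words. -/
def branches {A : Type*} (T : Set (List A)) : Set (ℕ → A) := {w | ∀ n, pre w n ∈ T}

/-- Prepend a finite word to an infinite word. -/
def cat {A : Type*} (u : List A) (w : ℕ → A) : ℕ → A :=
  fun n => if h : n < u.length then u.get ⟨n, h⟩ else w (n - u.length)

/-- The set of off-words of an infinite word `w`:
words `(w|n) ⧺ [a]` with `a ≠ w(n)`. -/
def offWords {A : Type*} (w : ℕ → A) : Set (List A) :=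
  {u | ∃ n : ℕ, ∃ a : A, a ≠ w n ∧ u = pre w n ++ [a]}

section Helpers

variable {A : Type*}

lemma pre_length (w : ℕ → A) (n : ℕ) : (pre w n).length = n := by simp [pre]

lemma pre_getElem (w : ℕ → A) {n i : ℕ} (hi : i < (pre w n).length) :
    (pre w n)[i] = w i := by simp [pre]

lemma eq_pre (w : ℕ → A) (l : List A) (h : ∀ i (hi : i < l.length), l[i] = w i) :
    l = pre w l.length := by
  apply List.ext_getElem (by simp [pre_length])
  intro i h1 h2
  rw [pre_getElem, h]

lemma prefix_pre {w : ℕ → A} {n : ℕ} {v : List A} (h : v <+: pre w n) :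
    v = pre w v.length ∧ v.length ≤ n := by
  refine ⟨eq_pre w v fun i hi => ?_, by simpa [pre_length] using h.length_le⟩
  rw [h.getElem hi, pre_getElem]

lemma cat_lt {u : List A} {x : ℕ → A} {k : ℕ} (h : k < u.length) : cat u x k = u[k] := by
  simp [cat, h]

lemma cat_ge {u : List A} {x : ℕ → A} {k : ℕ} (h : u.length ≤ k) :
    cat u x k = x (k - u.length) := by
  simp [cat, Nat.not_lt.mpr h]

lemma pre_cat (u : List A) (x : ℕ → A) (m : ℕ) :
    pre (cat u x) (u.length + m) = u ++ pre x m := by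
  apply List.ext_getElem (by simp [pre_length])
  intro i h1 h2
  rw [pre_getElem]
  rcases lt_or_ge i u.length with h | h
  · rw [cat_lt h, List.getElem_append_left h]
  · rw [cat_ge h, List.getElem_append_right h, pre_getElem]

lemma off_length (w : ℕ → A) (n : ℕ) (a : A) : (pre w n ++ [a]).length = n + 1 := by
  simp [pre_length]

lemma off_getElem_lt (w : ℕ → A) (n : ℕ) (a : A) {k : ℕ} (h : k < n)
    (hk : k < (pre w n ++ [a]).length) : (pre w n ++ [a])[k] = w k := by
  rw [List.getElem_append_left (by simpa [pre_length] using h), pre_getElem]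

lemma off_getElem_eq (w : ℕ → A) (n : ℕ) (a : A)
    (hk : n < (pre w n ++ [a]).length) : (pre w n ++ [a])[n] = a := by
  rw [List.getElem_append_right (by simp [pre_length])]
  simp [pre_length]

lemma cat_off_lt (w : ℕ → A) (n : ℕ) (a : A) (x : ℕ → A) {k : ℕ} (h : k < n) :
    cat (pre w n ++ [a]) x k = w k := by
  rw [cat_lt (by simp [pre_length]; omega), off_getElem_lt w n a h]

lemma cat_off_at (w : ℕ → A) (n : ℕ) (a : A) (x : ℕ → A) :
    cat (pre w n ++ [a]) x n = a := by
  rw [cat_lt (by simp [pre_length]), off_getElem_eq]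

lemma cat_off_ge (w : ℕ → A) (n : ℕ) (a : A) (x : ℕ → A) (k : ℕ) :
    cat (pre w n ++ [a]) x (n + 1 + k) = x k := by
  rw [cat_ge (by simp [pre_length]), off_length]
  congr 1; omega

lemma pre_cat_off (w : ℕ → A) (n : ℕ) (a : A) (x : ℕ → A) {m : ℕ} (h : m ≤ n) :
    pre (cat (pre w n ++ [a]) x) m = pre w m := by
  apply List.ext_getElem (by simp [pre_length])
  intro i h1 h2
  rw [pre_getElem, pre_getElem, cat_off_lt w n a x (by simp [pre_length] at h1; omega)]

lemma prefix_split {u t v : List A} (h : v <+: u ++ t) (hl : u.length ≤ v.length) :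
    ∃ s, s <+: t ∧ v = u ++ s := by
  have hu : u <+: v := List.prefix_of_prefix_length_le (List.prefix_append u t) h hl
  obtain ⟨s, rfl⟩ := hu
  exact ⟨s, (List.prefix_append_right_inj u).mp h, rfl⟩

lemma pre_split (w z : ℕ → A) (n m : ℕ) (hlt : ∀ k < n, z k = w k) :
    pre z (n + 1 + m) = (pre w n ++ [z n]) ++ pre (fun k => z (n + 1 + k)) m := by
  apply List.ext_getElem (by simp [pre_length]; omega)
  intro i h1 h2
  rw [pre_getElem]
  rcases lt_or_ge i (n+1) with h | h
  · rw [List.getElem_append_left (by simp [pre_length]; omega)]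
    rcases lt_or_ge i n with h' | h'
    · rw [off_getElem_lt w n (z n) h', hlt i h']
    · have : i = n := by omega
      subst this
      rw [off_getElem_eq]
  · rw [List.getElem_append_right (by simp [pre_length]; omega), pre_getElem]
    simp [pre_length]
    congr 1; omega


end Helpers

set_option maxHeartbeats 800000 in
/-- for a family of trees `(T_u)` indexed by the off-words of `w`,
`T = Pref(w) ∪ ⋃_{u ∈ w°} uT_u` is a tree with
`[T] = {w} ∪ ⋃_{u ∈ w°} u[T_u]`, the sets `u[T_u]` being pairwise disjoint
and not containing `w`. -/
theorem branch_construction_offwords {A : Type*} (w : ℕ → A) (Tu : List A → Set (List A))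
    (hTu : ∀ u ∈ offWords w, IsTree (Tu u)) :
    IsTree (Set.range (pre w) ∪ ⋃ u ∈ offWords w, (fun v => u ++ v) '' Tu u) ∧
      (branches (Set.range (pre w) ∪ ⋃ u ∈ offWords w, (fun v => u ++ v) '' Tu u) =
        {w} ∪ ⋃ u ∈ offWords w, cat u '' branches (Tu u)) ∧
      (∀ u ∈ offWords w, ∀ u' ∈ offWords w, u ≠ u' →
        Disjoint (cat u '' branches (Tu u)) (cat u' '' branches (Tu u'))) ∧
      ∀ u ∈ offWords w, w ∉ cat u '' branches (Tu u) := by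
  refine ⟨?_, ?_, ?_, ?_⟩
  · -- IsTree
    rintro l (⟨n, rfl⟩ | hl) v hv
    · obtain ⟨hv1, hv2⟩ := prefix_pre hv
      exact Or.inl ⟨v.length, hv1.symm⟩
    · simp only [Set.mem_iUnion, Set.mem_image] at hl
      obtain ⟨u, hu, t, ht, rfl⟩ := hl
      rcases le_or_gt v.length u.length with hlen | hlen
      · -- v is a prefix of u
        have hvu : v <+: u :=
          List.prefix_of_prefix_length_le hv (List.prefix_append u t) hlen
        obtain ⟨n, a, ha, rfl⟩ := hu
        rcases lt_or_ge v.length (n+1) with h | h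
        · have : v <+: pre w n :=
            List.prefix_of_prefix_length_le hvu (List.prefix_append _ _)
              (by simp [pre_length]; omega)
          obtain ⟨hv1, _⟩ := prefix_pre this
          exact Or.inl ⟨v.length, hv1.symm⟩
        · have : v = pre w n ++ [a] := hvu.eq_of_length (by simp [pre_length] at *; omega)
          subst this
          refine Or.inr ?_
          simp only [Set.mem_iUnion, Set.mem_image]
          exact ⟨_, ⟨n, a, ha, rfl⟩, [], hTu _ ⟨n, a, ha, rfl⟩ t ht [] (List.nil_prefix),
            by simp⟩
      · obtain ⟨s, hs, rfl⟩ := prefix_split hv hlen.le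
        refine Or.inr ?_
        simp only [Set.mem_iUnion, Set.mem_image]
        exact ⟨u, hu, s, hTu u hu t ht s hs, rfl⟩
  · -- branches
    ext z
    simp only [branches, Set.mem_setOf_eq, Set.mem_union, Set.mem_singleton_iff,
      Set.mem_iUnion, Set.mem_image]
    constructor
    · intro hz
      classical
      by_cases hzw : ∀ k, z k = w k
      · exact Or.inl (funext hzw)
      · push_neg at hzw
        have hex : ∃ k, z k ≠ w k := hzw
        set n := Nat.find hex with hn
        have hne : z n ≠ w n := Nat.find_spec hex
        have hlt : ∀ k < n, z k = w k := fun k hk => not_not.mp (Nat.find_min hex hk)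
        set u := pre w n ++ [z n] with hudef
        have hu : u ∈ offWords w := ⟨n, z n, hne, rfl⟩
        set x := fun k => z (n + 1 + k) with hxdef
        refine Or.inr ⟨u, hu, x, ?_, ?_⟩
        · -- x ∈ branches (Tu u)
          intro m
          have hzm := hz (n + 1 + m)
          rw [pre_split w z n m hlt] at hzm
          rcases hzm with ⟨N, hN⟩ | hzm
          · exfalso
            have hNlen : N = n + 1 + m := by
              have h0 := congrArg List.length hN
              simp [pre_length] at h0; omega
            subst hNlen
            have := List.getElem_of_eq hN (show n < (pre w (n+1+m)).length by
              simp [pre_length]; omega)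
            rw [pre_getElem, List.getElem_append_left (by simp [pre_length]),
              off_getElem_eq] at this
            exact hne this.symm
          · obtain ⟨u', hu', t, ht, heq⟩ := hzm
            obtain ⟨n', a', ha', rfl⟩ := hu'
            -- u' is a prefix of pre z (n+1+m)
            have hpref : pre w n' ++ [a'] <+: pre z (n + 1 + m) := by
              rw [pre_split w z n m hlt]
              exact heq ▸ (List.prefix_append _ t)
            obtain ⟨h1, h2⟩ := prefix_pre hpref
            have hlen' : (pre w n' ++ [a']).length = n' + 1 := by simp [pre_length]
            -- entries: a' = z n', and w i = z i for i < n'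
            have ha'z : a' = z n' := by
              have := List.getElem_of_eq h1 (show n' < (pre w n' ++ [a']).length by omega)
              rwa [off_getElem_eq, pre_getElem] at this
            have hiz : ∀ i < n', w i = z i := by
              intro i hi
              have := List.getElem_of_eq h1 (show i < (pre w n' ++ [a']).length by omega)
              rwa [off_getElem_lt w n' a' hi, pre_getElem] at this
            have hnn : n' = n := by
              rcases lt_trichotomy n' n with h | h | h
              · exact absurd (ha'z.trans (hlt n' h)) ha'
              · exact h
              · exact absurd ((hiz n h).symm) hne
            subst hnn
            have : a' = z n := ha'z
            subst this
            have : t = pre x m := List.append_cancel_left heq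
            subst this
            exact ht
        · -- z = cat u x
          funext k
          rcases lt_trichotomy k n with h | h | h
          · rw [cat_off_lt w n (z n) x h, hlt k h]
          · subst h; rw [cat_off_at]
          · have : k = n + 1 + (k - (n+1)) := by omega
            rw [this, cat_off_ge]
    · rintro (rfl | ⟨u, hu, x, hx, rfl⟩)
      · exact fun n => Or.inl ⟨n, rfl⟩
      · intro m
        obtain ⟨n, a, ha, rfl⟩ := hu
        rcases le_or_gt m n with h | h
        · rw [pre_cat_off w n a x h]
          exact Or.inl ⟨m, rfl⟩
        · have hm : m = (pre w n ++ [a]).length + (m - (n+1)) := by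
            simp [pre_length]; omega
          rw [hm, pre_cat]
          exact Or.inr ⟨_, ⟨n, a, ha, rfl⟩, pre x _, hx _, rfl⟩
  · -- disjoint
    rintro u ⟨n, a, ha, rfl⟩ u' ⟨n', a', ha', rfl⟩ hne
    rw [Set.disjoint_left]
    rintro z ⟨x, hx, rfl⟩ ⟨x', hx', heq⟩
    rcases lt_trichotomy n n' with h | h | h
    · have := congrFun heq n
      rw [cat_off_lt w n' a' x' h, cat_off_at] at this
      exact ha this.symm
    · subst h
      have := congrFun heq n
      rw [cat_off_at, cat_off_at] at this
      exact hne (by rw [this])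
    · have := congrFun heq n'
      rw [cat_off_at, cat_off_lt w n a x h] at this
      exact ha' this
  · -- w not in
    rintro u ⟨n, a, ha, rfl⟩ ⟨x, hx, heq⟩
    have := congrFun heq n
    rw [cat_off_at] at this
    exact ha this
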